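/- (Lemma: bond irreps of an injective symmetric MPS all belong to a single projective class.) Let N ≥ 1, let ι be a finite type, let A : ι → Matrix (Fin N) (Fin N) ℂ, let ω ∈ ℂ with ω ≠ 1, and let X ∈ Matrix (Fin N) (Fin N) ℂ be unitary with ω • A m = Xᴴ * A m * X for all m : ι (X implements a nontrivial projective phase ω on the MPS tensor). Then for every I ≥ 1 the map Γ_I is not injective. -/

import Mathlib

/-!
Conjugating the boundary matrix by `X` multiplies `Γ_I` by `ω ^ I`, because `Xᴴ (·) X` is
multiplicative and scales each `A m` by `ω`. If `Γ_I` were injective, conjugation by `X` would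
therefore be the scalar map `ω ^ I`; evaluating at `1` forces `ω ^ I = 1`, so conjugation by `X`
fixes every matrix, in particular each `A m`. Then `ω • A m = A m` with `ω ≠ 1` gives `A = 0`,
and `Γ_I` vanishes identically although `1 ≠ 0`.
-/

open Matrix

/-- The MPS map `Γ_I`: given an MPS tensor `A`, length `I` and a boundary matrix `M`,
returns the coefficient function `σ ↦ trace (M * A (σ 0) * ⋯ * A (σ (I-1)))`. -/
noncomputable def GammaMPS {N : ℕ} {ι : Type*} (A : ι → Matrix (Fin N) (Fin N) ℂ)
    (I : ℕ) (M : Matrix (Fin N) (Fin N) ℂ) : (Fin I → ι) → ℂ :=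
  fun σ => Matrix.trace (M * (List.ofFn fun i => A (σ i)).prod)

theorem List.prod_map_eq_pow_smul_of_map_eq_smul {ι S R F : Type*} [CommSemiring S] [Semiring R]
    [Algebra S R] [FunLike F R R] [MonoidHomClass F R R] (φ : F) {ω : S} {a : ι → R}
    (h : ∀ m, φ (a m) = ω • a m) (l : List ι) :
    φ (l.map a).prod = ω ^ l.length • (l.map a).prod := by
  induction l with
  | nil => simp
  | cons m l ih =>
    rw [List.map_cons, List.prod_cons, map_mul, h, ih, smul_mul_smul_comm, List.length_cons,
      pow_succ']

section GammaMPS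

variable {N I : ℕ} {ι : Type*} (A : ι → Matrix (Fin N) (Fin N) ℂ)

theorem GammaMPS_smul (c : ℂ) (M : Matrix (Fin N) (Fin N) ℂ) :
    GammaMPS A I (c • M) = c • GammaMPS A I M := by
  ext σ
  simp [GammaMPS, Matrix.trace_smul]

theorem GammaMPS_unitary_conj {ω : ℂ} {X : Matrix (Fin N) (Fin N) ℂ}
    (hX : X ∈ unitary (Matrix (Fin N) (Fin N) ℂ)) (hconj : ∀ m, ω • A m = Xᴴ * A m * X)
    (M : Matrix (Fin N) (Fin N) ℂ) :
    GammaMPS A I (X * M * Xᴴ) = ω ^ I • GammaMPS A I M := by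
  ext σ
  have hprod := (List.ofFn σ).prod_map_eq_pow_smul_of_map_eq_smul
    (Unitary.conjStarAlgAut ℂ _ (star ⟨X, hX⟩)) (a := A) fun m =>
      (Unitary.conjStarAlgAut_star_apply _ _).trans (hconj m).symm
  rw [Unitary.conjStarAlgAut_star_apply, List.length_ofFn] at hprod
  simp only [GammaMPS, List.ofFn_comp', Pi.smul_apply, smul_eq_mul]
  set P := (List.ofFn σ |>.map A).prod
  calc trace (X * M * Xᴴ * P)
      = trace (M * (Xᴴ * P * X)) := by simp only [Matrix.mul_assoc, trace_mul_comm X]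
    _ = ω ^ I * trace (M * P) := by
        rw [← star_eq_conjTranspose, hprod, Matrix.mul_smul, trace_smul, smul_eq_mul]

theorem GammaMPS_zero_tensor (hI : 1 ≤ I) :
    GammaMPS (0 : ι → Matrix (Fin N) (Fin N) ℂ) I = 0 := by
  obtain ⟨n, rfl⟩ := Nat.exists_eq_add_of_le' hI
  ext M σ
  simp [GammaMPS, List.ofFn_succ]

end GammaMPS

theorem nontrivial_phase_not_injective_general {N : ℕ} (hN : 1 ≤ N) {ι : Type*}
    (A : ι → Matrix (Fin N) (Fin N) ℂ)
    (ω : ℂ) (hω : ω ≠ 1)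
    (X : Matrix (Fin N) (Fin N) ℂ)
    (hX : X ∈ Matrix.unitaryGroup (Fin N) ℂ)
    (hconj : ∀ m : ι, ω • A m = Xᴴ * A m * X) :
    ∀ I, 1 ≤ I → ¬ Function.Injective (GammaMPS A I) := by
  intro I hI hinj
  have : Nonempty (Fin N) := ⟨⟨0, hN⟩⟩
  have hXX : X * Xᴴ = 1 := Unitary.mul_star_self_of_mem hX
  have hconjM : ∀ M, X * M * Xᴴ = ω ^ I • M := fun M =>
    hinj (by rw [GammaMPS_unitary_conj A hX hconj, GammaMPS_smul])
  have hωI : ω ^ I = 1 :=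
    smul_left_injective ℂ (one_ne_zero (α := Matrix (Fin N) (Fin N) ℂ))
      (show ω ^ I • (1 : Matrix (Fin N) (Fin N) ℂ) = (1 : ℂ) • 1 by
        rw [← hconjM, Matrix.mul_one, hXX, one_smul])
  have hA : A = 0 := by
    funext m
    have hfix : Xᴴ * A m * X = A m := calc
      Xᴴ * A m * X = X * (Xᴴ * A m * X) * Xᴴ := by rw [hconjM, hωI, one_smul]
      _ = X * Xᴴ * A m * (X * Xᴴ) := by simp only [Matrix.mul_assoc]
      _ = A m := by rw [hXX, Matrix.one_mul, Matrix.mul_one]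
    have hsub : (ω - 1) • A m = 0 := by rw [sub_smul, one_smul, hconj, hfix, sub_self]
    exact (smul_eq_zero.1 hsub).resolve_left (sub_ne_zero.2 hω)
  subst hA
  exact one_ne_zero (hinj (a₁ := 1) (a₂ := 0) (by rw [GammaMPS_zero_tensor hI]; rfl))

/-- Lemma: if a unitary `X` implements a nontrivial projective phase `ω ≠ 1` on the MPS
tensor, i.e. `ω • A m = Xᴴ * A m * X` for all `m`, then `Γ_I` is not injective for any
length `I`. -/
theorem nontrivial_phase_not_injective {N : ℕ} (hN : 1 ≤ N) {ι : Type*} [Fintype ι]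
    (A : ι → Matrix (Fin N) (Fin N) ℂ)
    (ω : ℂ) (hω : ω ≠ 1)
    (X : Matrix (Fin N) (Fin N) ℂ)
    (hX : X ∈ Matrix.unitaryGroup (Fin N) ℂ)
    (hconj : ∀ m : ι, ω • A m = Xᴴ * A m * X) :
    ∀ I, 1 ≤ I → ¬ Function.Injective (GammaMPS A I) :=
  nontrivial_phase_not_injective_general hN A ω hω X hX hconj
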